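/- arXiv:1903.06863 — 2 statements merged into one kernel-verified Lean document; each statement's English description precedes it below -/
import Mathlib

section
/- Let X be an abelian group and t, s : X → X group automorphisms. Then the operations x ▷̲ y = t(x) + s(y) − t(y) and x ▷̄ y = s(x) define a biquandle structure on X if and only if t and s commute (t∘s = s∘t); in particular, when t and s commute, all three exchange laws hold. -/
/-- A biquandle structure on `X`: two binary operations `u` (underride `▷̲`) and
`o` (override `▷̄`) satisfying axioms (i), (ii), (iii). -/
def IsBiquandle {X : Type*} (u o : X → X → X) : Prop :=
  (∀ x, u x x = o x x) ∧
  (∀ x, Function.Bijective (fun y => o y x)) ∧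
  (∀ x, Function.Bijective (fun y => u y x)) ∧
  Function.Bijective (fun p : X × X => (o p.2 p.1, u p.1 p.2)) ∧
  (∀ x y z, u (u x y) (u z y) = u (u x z) (o y z)) ∧
  (∀ x y z, o (u x y) (u z y) = u (o x z) (o y z)) ∧
  (∀ x y z, o (o x y) (o z y) = o (o x z) (u y z))

/-- For an abelian group X with automorphisms t, s, the operations
x ▷̲ y = t(x) + s(y) − t(y), x ▷̄ y = s(x) form a biquandle iff t and s commute. -/
theorem alexander_aut_isBiquandle_iff_comm {X : Type*} [AddCommGroup X]
    (t s : X ≃+ X) :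
    IsBiquandle (fun x y => t x + s y - t y) (fun x _ => s x) ↔
      ∀ x, t (s x) = s (t x) := by
  constructor
  · rintro ⟨-, -, -, -, -, h, -⟩ x
    have := h 0 x 0
    simp only [map_zero, zero_add, map_sub] at this
    exact (sub_right_inj.mp this).symm
  · intro hc
    refine ⟨fun x => by simp, fun x => s.bijective, ?_, ?_, ?_, ?_, ?_⟩
    · intro x
      constructor
      · intro a b hab
        simp only at hab
        have : t a = t b := by rwa [sub_left_inj, add_left_inj] at hab
        exact t.injective this
      · intro b
        exact ⟨t.symm (b - s x + t x), by simp only [AddEquiv.apply_symm_apply]; abel⟩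
    · constructor
      · rintro ⟨a₁, a₂⟩ ⟨b₁, b₂⟩ hab
        simp only [Prod.mk.injEq] at hab
        obtain ⟨h1, h2⟩ := hab
        have e2 : a₂ = b₂ := s.injective h1
        have : t a₁ = t b₁ := by rw [e2] at h2; rwa [sub_left_inj, add_left_inj] at h2
        exact Prod.ext (t.injective this) e2
      · rintro ⟨b₁, b₂⟩
        refine ⟨(t.symm (b₂ - s (s.symm b₁) + t (s.symm b₁)), s.symm b₁), ?_⟩
        simp only [Prod.mk.injEq, AddEquiv.apply_symm_apply]
        exact ⟨trivial, by abel⟩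
    · intro x y z
      simp only [map_add, map_sub]
      simp only [hc]
      abel
    · intro x y z
      simp only [map_add, map_sub, hc]
    · intro x y z
      simp
end

section
/- Over ℤ/5, the 8×7 bead-coloring matrix [[4,0,2,2,0,0,0],[0,4,4,0,0,0,0],[0,0,2,2,4,0,0],[4,0,0,4,0,0,0],[0,0,0,0,4,4,0],[4,0,0,0,0,0,3],[4,0,0,0,0,0,3],[0,4,0,0,0,4,0]] has rank 6; consequently its kernel (the space of bead colorings of the given X-colored diagram of 6_1^{0,1}) has exactly 5 elements. -/
open Matrix

private def Mb : Matrix (Fin 8) (Fin 7) (ZMod 5) :=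
  Matrix.of
      ![![4, 0, 2, 2, 0, 0, 0],
        ![0, 4, 4, 0, 0, 0, 0],
        ![0, 0, 2, 2, 4, 0, 0],
        ![4, 0, 0, 4, 0, 0, 0],
        ![0, 0, 0, 0, 4, 4, 0],
        ![4, 0, 0, 0, 0, 0, 3],
        ![4, 0, 0, 0, 0, 0, 3],
        ![0, 4, 0, 0, 0, 4, 0]]

private def wb : Fin 7 → ZMod 5 := ![1, 1, 4, 4, 1, 4, 2]

private lemma cv7_2 {α : Type*} (a b c d e f g : α) : ![a,b,c,d,e,f,g] (2 : Fin 7) = c := rfl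
private lemma cv7_3 {α : Type*} (a b c d e f g : α) : ![a,b,c,d,e,f,g] (3 : Fin 7) = d := rfl
private lemma cv7_4 {α : Type*} (a b c d e f g : α) : ![a,b,c,d,e,f,g] (4 : Fin 7) = e := rfl
private lemma cv7_5 {α : Type*} (a b c d e f g : α) : ![a,b,c,d,e,f,g] (5 : Fin 7) = f := rfl
private lemma cv7_6 {α : Type*} (a b c d e f g : α) : ![a,b,c,d,e,f,g] (6 : Fin 7) = g := rfl

private lemma ker_iff (v : Fin 7 → ZMod 5) : Mb.mulVec v = 0 ↔ ∃ c : ZMod 5, v = c • wb := by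
  constructor
  · intro h
    have hr : ∀ (i : Fin 8) (r : Fin 7 → ZMod 5), Mb i = r → r ⬝ᵥ v = 0 := by
      intro i r e
      rw [← e]
      exact congrFun h i
    have h0 := hr 0 ![4, 0, 2, 2, 0, 0, 0] rfl
    have h1 := hr 1 ![0, 4, 4, 0, 0, 0, 0] rfl
    have h2 := hr 3 ![4, 0, 0, 4, 0, 0, 0] rfl
    have h3 := hr 4 ![0, 0, 0, 0, 4, 4, 0] rfl
    have h4 := hr 5 ![4, 0, 0, 0, 0, 0, 3] rfl
    have h5 := hr 2 ![0, 0, 2, 2, 4, 0, 0] rfl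
    simp [dotProduct, Fin.sum_univ_seven,
      cv7_2, cv7_3, cv7_4, cv7_5, cv7_6] at h0 h1 h2 h3 h4 h5
    refine ⟨v 0, funext fun i => ?_⟩
    have hz : (5 : ZMod 5) = 0 := by decide
    fin_cases i
    · show v 0 = v 0 * 1; ring
    · show v 1 = v 0 * 1
      linear_combination 2*h0 + 4*h1 + 4*h2 + (-(3*v 1) - 5*v 0 - 4*v 2 - 4*v 3)*hz
    · show v 2 = v 0 * 4
      linear_combination 3*h0 + h2 + (-(v 2) - 4*v 0 - 2*v 3)*hz
    · show v 3 = v 0 * 4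
      linear_combination 4*h2 + (-(3*v 3) - 4*v 0)*hz
    · show v 4 = v 0 * 1
      linear_combination h0 + 4*h5 + (-(3*v 4) - v 0 - 2*v 2 - 2*v 3)*hz
    · show v 5 = v 0 * 4
      linear_combination 4*h0 + 4*h3 + h5 + (-(3*v 5) - 4*v 0 - 2*v 2 - 2*v 3 - 4*v 4)*hz
    · show v 6 = v 0 * 2
      linear_combination 2*h4 + (-(v 6) - 2*v 0)*hz
  · rintro ⟨c, rfl⟩
    revert c; decide

/-- The 8×7 bead-coloring matrix over ℤ/5 for the given X-colored diagram of
6₁^{0,1} has rank 6, so its kernel has exactly 5 elements. -/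
theorem bead_matrix_rank_and_kernel :
    (Matrix.of
      ![![4, 0, 2, 2, 0, 0, 0],
        ![0, 4, 4, 0, 0, 0, 0],
        ![0, 0, 2, 2, 4, 0, 0],
        ![4, 0, 0, 4, 0, 0, 0],
        ![0, 0, 0, 0, 4, 4, 0],
        ![4, 0, 0, 0, 0, 0, 3],
        ![4, 0, 0, 0, 0, 0, 3],
        ![0, 4, 0, 0, 0, 4, 0]] : Matrix (Fin 8) (Fin 7) (ZMod 5)).rank = 6 ∧
    Nat.card {v : Fin 7 → ZMod 5 //
      (Matrix.of
        ![![4, 0, 2, 2, 0, 0, 0],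
          ![0, 4, 4, 0, 0, 0, 0],
          ![0, 0, 2, 2, 4, 0, 0],
          ![4, 0, 0, 4, 0, 0, 0],
          ![0, 0, 0, 0, 4, 4, 0],
          ![4, 0, 0, 0, 0, 0, 3],
          ![4, 0, 0, 0, 0, 0, 3],
          ![0, 4, 0, 0, 0, 4, 0]] : Matrix (Fin 8) (Fin 7) (ZMod 5)).mulVec v
        = 0} = 5 := by
  haveI : Fact (Nat.Prime 5) := ⟨by norm_num⟩
  constructor
  · -- rank via rank-nullity
    have hker : LinearMap.ker Mb.mulVecLin = Submodule.span (ZMod 5) {wb} := by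
      ext v
      rw [LinearMap.mem_ker, Matrix.mulVecLin_apply, ker_iff,
        Submodule.mem_span_singleton]
      exact ⟨fun ⟨c, hc⟩ => ⟨c, hc.symm⟩, fun ⟨c, hc⟩ => ⟨c, hc.symm⟩⟩
    have hwb : wb ≠ 0 := by
      intro hh
      exact one_ne_zero (show (1 : ZMod 5) = 0 from congrFun hh 0)
    have hdim : Module.finrank (ZMod 5) (LinearMap.ker Mb.mulVecLin) = 1 := by
      rw [hker, finrank_span_singleton hwb]
    have hrn := LinearMap.finrank_range_add_finrank_ker Mb.mulVecLin
    have hdom : Module.finrank (ZMod 5) (Fin 7 → ZMod 5) = 7 := by simp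
    have : Mb.rank = 6 := by
      show Module.finrank (ZMod 5) (LinearMap.range Mb.mulVecLin) = 6
      omega
    exact this
  · -- kernel cardinality
    have : Nat.card {v : Fin 7 → ZMod 5 // Mb.mulVec v = 0} = 5 := by
      have e : {v : Fin 7 → ZMod 5 // Mb.mulVec v = 0} ≃ ZMod 5 :=
        { toFun := fun v => v.1 0
          invFun := fun c => ⟨c • wb, ((ker_iff _).2 ⟨c, rfl⟩)⟩
          left_inv := by
            rintro ⟨v, hv⟩
            obtain ⟨c, rfl⟩ := (ker_iff v).1 hv
            simp [wb]
          right_inv := by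
            intro c
            simp [wb] }
      rw [Nat.card_congr e]
      simp [Nat.card_eq_fintype_card]
    exact this
end
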